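/- arXiv:1809.07398 — 3 statements merged into one kernel-verified Lean document; each statement's English description precedes it below -/
import Mathlib

section
/- Let σ be a permutation of [n] with d descents whose last entry is 1. Then the maximum possible weight of such σ is (d−1)(n−d−1). -/
/-- Number of descents of a sequence. -/
def desL : List ℕ → ℕ
  | a :: b :: t => (if b < a then 1 else 0) + desL (b :: t)
  | _ => 0

/-- Repeatedly split a sequence just after its maximum element. -/
def splitLeftAux : ℕ → List ℕ → List (List ℕ)
  | 0, _ => []
  | _, [] => []
  | fuel + 1, l =>
    let i := l.idxOf (l.foldr Nat.max 0)
    l.take (i + 1) :: splitLeftAux fuel (l.drop (i + 1))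

def splitLeft (l : List ℕ) : List (List ℕ) := splitLeftAux l.length l

/-- Split a sequence at its minimum element, splitting the left part
repeatedly just after its maximum. -/
def splitAll (l : List ℕ) : List (List ℕ) :=
  let m := l.foldr Nat.min (l.headD 0)
  let i := l.idxOf m
  splitLeft (l.take i) ++ [[m]] ++ [l.drop (i + 1)]

/-- The weight of a sequence of distinct naturals (fuelled version; the fuel
`(length+2)^2` in `weightL` is more than the recursion depth ever needed). -/
def weightAux : ℕ → List ℕ → ℕ
  | 0, _ => 0
  | fuel + 1, l =>
    if l.length ≤ 1 ∨ l.Pairwise (· < ·) then 0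
    else ((splitAll (l ++ [l.foldr Nat.max 0 + 1])).map
      (fun p => desL p + weightAux fuel p)).sum

/-- The weight of a permutation viewed as a sequence. -/
def weightL (l : List ℕ) : ℕ := weightAux ((l.length + 2) ^ 2) l

/-- `l` is a permutation of `[n] = {1,…,n}` written as a sequence. -/
def IsPermList (n : ℕ) (l : List ℕ) : Prop := l.Perm (List.range' 1 n)

/-!
Write `σ = s ++ [1]`. Since `1` is the minimum, the top-level split of `σ ++ [n + 1]` is
`splitLeft s`, `[1]`, `[n + 1]`, so `w(σ)` is the cost of the max-blocks of `s`. The invariant is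
`w(s ++ u) ≤ des(s) * asc(s)` whenever `u` is increasing and lies above `s` (the appended maximum
is such a `u`): cutting at the minimum, or just after the maximum, leaves an ascent at the cut next
to the piece that is charged its descents, and that ascent raises `des * asc` by at least the
charge. For `s` with `d - 1` descents and `n - d - 1` ascents this is the bound. It is attained by
`2 3 … (m+1) | (m+d+1) … (m+2) | n | 1` with `m = n - d - 2`: peeling the minimum off the front
costs `d - 1` each of the `m` times, and the remaining block costs `d - 1` once more.
-/

def ascL (l : List ℕ) : ℕ := desL l.reverse

section Descents

variable {s t l : List ℕ} {x : ℕ}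

@[simp]
theorem desL_singleton (x : ℕ) : desL [x] = 0 := rfl

theorem desL_append_cons : ∀ (s : List ℕ) (a : ℕ) (t : List ℕ),
    desL (s ++ a :: t) = desL (s ++ [a]) + desL (a :: t)
  | [], _, _ => by simp
  | [_], _, _ => by simp [desL]
  | x :: y :: s, a, t => by
    have := desL_append_cons (y :: s) a t
    simp only [List.cons_append, desL] at this ⊢
    omega

theorem desL_append_pair (s : List ℕ) (y x : ℕ) :
    desL (s ++ [y, x]) = desL (s ++ [y]) + if x < y then 1 else 0 := by
  rw [desL_append_cons]
  simp [desL]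

theorem desL_concat_of_max (h : ∀ y ∈ s, y < x) : desL (s ++ [x]) = desL s := by
  obtain rfl | ⟨s, y, rfl⟩ := s.eq_nil_or_concat'
  · rfl
  · rw [List.append_assoc, List.singleton_append, desL_append_pair,
      if_neg (h y (by simp)).le.not_gt, add_zero]

theorem desL_concat_of_min (h : ∀ y ∈ s, x < y) :
    desL (s ++ [x]) = desL s + if s = [] then 0 else 1 := by
  obtain rfl | ⟨s, y, rfl⟩ := s.eq_nil_or_concat'
  · rfl
  · rw [List.append_assoc, List.singleton_append, desL_append_pair, if_pos (h y (by simp))]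
    simp

theorem desL_cons_of_min (h : ∀ y ∈ t, x < y) : desL (x :: t) = desL t := by
  cases t with
  | nil => rfl
  | cons y t => simp [desL, (h y (by simp)).le.not_gt]

theorem desL_cons_of_max (h : ∀ y ∈ t, y < x) :
    desL (x :: t) = (if t = [] then 0 else 1) + desL t := by
  cases t with
  | nil => rfl
  | cons y t => simp [desL, h y (by simp)]

theorem desL_append_cons_of_max (hs : ∀ y ∈ s, y < x) (ht : ∀ y ∈ t, y < x) :
    desL (s ++ x :: t) = desL s + ((if t = [] then 0 else 1) + desL t) := by
  rw [desL_append_cons, desL_concat_of_max hs, desL_cons_of_max ht]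

theorem desL_append_cons_of_min (hs : ∀ y ∈ s, x < y) (ht : ∀ y ∈ t, x < y) :
    desL (s ++ x :: t) = desL s + (if s = [] then 0 else 1) + desL t := by
  rw [desL_append_cons, desL_concat_of_min hs, desL_cons_of_min ht]

theorem desL_append_of_forall_lt (h : ∀ x ∈ s, ∀ y ∈ t, x < y) :
    desL (s ++ t) = desL s + desL t := by
  cases t with
  | nil => simp [desL]
  | cons a t => rw [desL_append_cons, desL_concat_of_max fun x hx => h x hx a (by simp)]

theorem desL_eq_zero_of_pairwise (h : l.Pairwise (· < ·)) : desL l = 0 := by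
  induction l with
  | nil => rfl
  | cons a t ih =>
    rw [List.pairwise_cons] at h
    rw [desL_cons_of_min h.1, ih h.2]

theorem ascL_reverse (l : List ℕ) : ascL l.reverse = desL l := by
  simp [ascL]

theorem ascL_append_cons_of_max (hs : ∀ y ∈ s, y < x) (ht : ∀ y ∈ t, y < x) :
    ascL (s ++ x :: t) = ascL s + (if s = [] then 0 else 1) + ascL t := by
  simp only [ascL, List.reverse_append, List.reverse_cons, List.append_assoc,
    List.singleton_append]
  rw [desL_append_cons_of_max (by simpa) (by simpa)]
  simp only [List.reverse_eq_nil_iff]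
  omega

theorem ascL_append_cons_of_min (hs : ∀ y ∈ s, x < y) (ht : ∀ y ∈ t, x < y) :
    ascL (s ++ x :: t) = ascL s + ((if t = [] then 0 else 1) + ascL t) := by
  simp only [ascL, List.reverse_append, List.reverse_cons, List.append_assoc,
    List.singleton_append]
  rw [desL_append_cons_of_min (by simpa) (by simpa)]
  simp only [List.reverse_eq_nil_iff]
  omega

theorem desL_add_ascL : ∀ {l : List ℕ}, l.Nodup → desL l + ascL l = l.length - 1
  | [], _ => rfl
  | [_], _ => rfl
  | a :: b :: t, hl => by
    have ih := desL_add_ascL hl.of_cons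
    have hab : a ≠ b := by simp_all
    have hasc : ascL (a :: b :: t) = ascL (b :: t) + if a < b then 1 else 0 := by
      simp only [ascL, List.reverse_cons, List.append_assoc, List.singleton_append]
      exact desL_append_pair _ _ _
    simp only [desL, hasc, List.length_cons] at ih ⊢
    split_ifs <;> omega

theorem desL_reverse_range' (c d : ℕ) : desL (List.range' c d).reverse = d - 1 := by
  have := desL_add_ascL (List.nodup_reverse.2 (List.nodup_range' (s := c) (n := d)))
  rw [ascL_reverse, desL_eq_zero_of_pairwise (List.pairwise_lt_range' (s := c) (n := d))] at this
  simpa using this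

end Descents

section ListExtremes

theorem List.Pairwise.append_singleton {α : Type*} {R : α → α → Prop} {u : List α} {x : α}
    (hu : u.Pairwise R) (h : ∀ y ∈ u, R y x) : (u ++ [x]).Pairwise R :=
  List.pairwise_append.2 ⟨hu, List.pairwise_singleton _ _, fun y hy _ hz =>
    (List.mem_singleton.1 hz) ▸ h y hy⟩

variable {α : Type*} [LinearOrder α] {l : List α}

theorem List.Nodup.exists_eq_append_cons_max (hl : l.Nodup) (hne : l ≠ []) :
    ∃ s x t, l = s ++ x :: t ∧ (∀ y ∈ s, y < x) ∧ ∀ y ∈ t, y < x := by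
  obtain ⟨x, hx, hmax⟩ := l.toFinset.exists_max_image id (by simpa using hne)
  rw [List.mem_toFinset] at hx
  obtain ⟨s, t, rfl⟩ := List.append_of_mem hx
  have hxst : x ∉ s ++ t := (List.nodup_cons.1 (List.nodup_middle.1 hl)).1
  refine ⟨s, x, t, rfl, fun y hy => ?_, fun y hy => ?_⟩ <;>
    exact lt_of_le_of_ne (hmax y (by simp [hy])) (by rintro rfl; simp [hy] at hxst)

theorem List.Nodup.exists_eq_append_cons_min (hl : l.Nodup) (hne : l ≠ []) :
    ∃ s x t, l = s ++ x :: t ∧ (∀ y ∈ s, x < y) ∧ ∀ y ∈ t, x < y :=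
  List.Nodup.exists_eq_append_cons_max (α := αᵒᵈ) hl hne

theorem le_foldr_min {a b : α} (hl : ∀ x ∈ l, a ≤ x) (hb : a ≤ b) : a ≤ l.foldr min b := by
  induction l with
  | nil => exact hb
  | cons y l ih => simp_all

end ListExtremes

theorem splitLeftAux_congr : ∀ {f g : ℕ} {l : List ℕ}, l.length ≤ f → l.length ≤ g →
    splitLeftAux f l = splitLeftAux g l
  | 0, 0, _, _, _ => rfl
  | 0, _ + 1, [], _, _ => rfl
  | _ + 1, 0, [], _, _ => rfl
  | _ + 1, _ + 1, [], _, _ => rfl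
  | 0, _, _ :: _, hf, _ => by simp at hf
  | _ + 1, 0, _ :: _, _, hg => by simp at hg
  | f + 1, g + 1, a :: t, hf, hg => by
    simp only [splitLeftAux]
    congr 1
    apply splitLeftAux_congr <;> simp at hf hg ⊢ <;> omega

variable {s t : List ℕ} {x : ℕ}

theorem splitLeft_append_cons_of_max (hs : ∀ y ∈ s, y < x) (ht : ∀ y ∈ t, y < x) :
    splitLeft (s ++ x :: t) = (s ++ [x]) :: splitLeft t := by
  have hmax : (s ++ x :: t).foldr Nat.max 0 = x :=
    le_antisymm (List.max_le_of_forall_le _ _ (List.forall_mem_append.2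
        ⟨fun y hy => (hs y hy).le, List.forall_mem_cons.2 ⟨le_rfl, fun y hy => (ht y hy).le⟩⟩))
      (List.le_max_of_le' 0 (by simp) le_rfl)
  have hidx : (s ++ x :: t).idxOf x = s.length := by
    rw [List.idxOf_append_of_notMem fun h => (hs x h).false]
    simp
  rw [splitLeft, show (s ++ x :: t).length = (s.length + t.length) + 1 by simp; omega,
    splitLeftAux]
  · rw [hmax, hidx, show s ++ x :: t = (s ++ [x]) ++ t by simp,
      List.take_left' (by simp), List.drop_left' (by simp)]
    exact congrArg _ (splitLeftAux_congr (by omega) le_rfl)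
  · simp

theorem splitAll_append_cons_of_min (hs : ∀ y ∈ s, x < y) (ht : ∀ y ∈ t, x < y) :
    splitAll (s ++ x :: t) = splitLeft s ++ [[x]] ++ [t] := by
  have hle : ∀ y ∈ s ++ x :: t, x ≤ y := List.forall_mem_append.2
    ⟨fun y hy => (hs y hy).le, List.forall_mem_cons.2 ⟨le_rfl, fun y hy => (ht y hy).le⟩⟩
  have hmin : (s ++ x :: t).foldr Nat.min ((s ++ x :: t).headD 0) = x := by
    refine le_antisymm (List.min_le_of_le' _ (by simp) le_rfl) (le_foldr_min hle (hle _ ?_))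
    cases s <;> simp
  have hidx : (s ++ x :: t).idxOf x = s.length := by
    rw [List.idxOf_append_of_notMem fun h => (hs x h).false]
    simp
  rw [splitAll]
  simp only [hmin, hidx]
  rw [List.take_left, show s ++ x :: t = (s ++ [x]) ++ t by simp, List.drop_left' (by simp)]

def piecesWeight (f : ℕ) (ps : List (List ℕ)) : ℕ :=
  (ps.map fun p => desL p + weightAux f p).sum

@[simp]
theorem piecesWeight_nil (f : ℕ) : piecesWeight f [] = 0 := rfl

@[simp]
theorem piecesWeight_cons (f : ℕ) (p : List ℕ) (ps : List (List ℕ)) :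
    piecesWeight f (p :: ps) = desL p + weightAux f p + piecesWeight f ps := by
  simp [piecesWeight]

@[simp]
theorem piecesWeight_append (f : ℕ) (ps qs : List (List ℕ)) :
    piecesWeight f (ps ++ qs) = piecesWeight f ps + piecesWeight f qs := by
  simp [piecesWeight]

theorem weightAux_of_pairwise {l : List ℕ} (h : l.Pairwise (· < ·)) : ∀ f, weightAux f l = 0
  | 0 => rfl
  | _ + 1 => by rw [weightAux, if_pos (Or.inr h)]

@[simp]
theorem weightAux_singleton (f x : ℕ) : weightAux f [x] = 0 :=
  weightAux_of_pairwise (List.pairwise_singleton _ _) f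

theorem exists_weightAux_succ_append_cons_of_min (f : ℕ) (hs : ∀ y ∈ s, x < y)
    (ht : ∀ y ∈ t, x < y) :
    ∃ M, (∀ y ∈ s ++ x :: t, y < M) ∧ weightAux (f + 1) (s ++ x :: t) =
      piecesWeight f (splitLeft s) + (desL (t ++ [M]) + weightAux f (t ++ [M])) := by
  set M := (s ++ x :: t).foldr Nat.max 0 + 1
  have hM : ∀ y ∈ s ++ x :: t, y < M := fun y hy =>
    Nat.lt_succ_of_le (List.le_max_of_le' 0 hy le_rfl)
  refine ⟨M, hM, ?_⟩
  rw [weightAux]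
  split_ifs with htriv
  · -- degenerate branch (length `≤ 1` or increasing): `s = []` and the formula also gives `0`
    obtain ⟨rfl, ht'⟩ : s = [] ∧ t.Pairwise (· < ·) := by
      rcases htriv with hlen | hsort
      · simp only [List.length_append, List.length_cons] at hlen
        simp [List.eq_nil_of_length_eq_zero (by omega : s.length = 0),
          List.eq_nil_of_length_eq_zero (by omega : t.length = 0)]
      · rw [List.pairwise_append, List.pairwise_cons] at hsort
        exact ⟨List.eq_nil_iff_forall_not_mem.2 fun y hy =>
          (hs y hy).asymm (hsort.2.2 y hy x (by simp)), hsort.2.1.2⟩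
    have htM : (t ++ [M]).Pairwise (· < ·) := ht'.append_singleton fun y hy => hM y (by simp [hy])
    simp [desL_eq_zero_of_pairwise htM, weightAux_of_pairwise htM, splitLeft, splitLeftAux]
  · have hxM : ∀ y ∈ t ++ [M], x < y := by
      simp only [List.mem_append, List.mem_singleton]
      rintro y (hy | rfl)
      exacts [ht y hy, hM x (by simp)]
    rw [show s ++ x :: t ++ [M] = s ++ x :: (t ++ [M]) by simp,
      splitAll_append_cons_of_min hs hxM]
    change piecesWeight f _ = _
    simp only [piecesWeight_append, piecesWeight_cons, piecesWeight_nil, desL_singleton,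
      weightAux_singleton]
    omega

theorem add_mul_add_le_mul {a a' b b' e e' : ℕ} (h : a = 0 ∨ 1 ≤ e) :
    a + a * a' + b * b' ≤ (a + (e' + b)) * (a' + e + b') := by
  rcases h with rfl | h <;> nlinarith

theorem piecesWeight_splitLeft_le_of_weightAux_concat_le (f : ℕ)
    (hw : ∀ s : List ℕ, s.Nodup → ∀ x, (∀ y ∈ s, y < x) →
      weightAux f (s ++ [x]) ≤ desL s * ascL s) {l : List ℕ} (hl : l.Nodup) :
    piecesWeight f (splitLeft l) ≤ desL l * ascL l := by
  induction hn : l.length using Nat.strong_induction_on generalizing l with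
  | _ n ih =>
  rcases eq_or_ne l [] with rfl | hne
  · simp [splitLeft, splitLeftAux]
  obtain ⟨s, x, t, rfl, hs, ht⟩ := hl.exists_eq_append_cons_max hne
  obtain ⟨hsnd, hxt, -⟩ := List.nodup_append.1 hl
  have hs_bound := hw s hsnd x hs
  have ht_bound := ih t.length (by simp [← hn]; omega) hxt.of_cons rfl
  have hs_empty : desL s = 0 ∨ 1 ≤ if s = [] then 0 else 1 := by
    by_cases h : s = [] <;> simp [h, desL]
  rw [splitLeft_append_cons_of_max hs ht, piecesWeight_cons, desL_concat_of_max hs,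
    desL_append_cons_of_max hs ht, ascL_append_cons_of_max hs ht]
  calc desL s + weightAux f (s ++ [x]) + piecesWeight f (splitLeft t)
      ≤ desL s + desL s * ascL s + desL t * ascL t := by omega
    _ ≤ _ := add_mul_add_le_mul hs_empty

theorem weightAux_append_le : ∀ (f : ℕ) {s u : List ℕ}, s.Nodup → u.Pairwise (· < ·) →
    (∀ x ∈ s, ∀ y ∈ u, x < y) → weightAux f (s ++ u) ≤ desL s * ascL s
  | 0, _, _, _, _, _ => Nat.zero_le _
  | f + 1, l, u, hl, hu, hlu => by
    rcases eq_or_ne l [] with rfl | hne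
    · simp [weightAux_of_pairwise hu]
    obtain ⟨s, x, t, rfl, hs, ht⟩ := hl.exists_eq_append_cons_min hne
    obtain ⟨hsnd, hxt, -⟩ := List.nodup_append.1 hl
    obtain ⟨M, hM, hw⟩ := exists_weightAux_succ_append_cons_of_min f (t := t ++ u) hs
      (fun y hy => (List.mem_append.1 hy).elim (ht y) (hlu x (by simp) y))
    have huM : (u ++ [M]).Pairwise (· < ·) := hu.append_singleton fun y hy => hM y (by simp [hy])
    have htuM : ∀ y ∈ t, ∀ z ∈ u ++ [M], y < z := by
      intro y hy z hz
      simp only [List.mem_append, List.mem_singleton] at hz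
      rcases hz with hz | rfl
      exacts [hlu y (by simp [hy]) z hz, hM y (by simp [hy])]
    have hs_bound := piecesWeight_splitLeft_le_of_weightAux_concat_le f
      (fun s hs x hx => weightAux_append_le f hs (List.pairwise_singleton _ _) (by simpa)) hsnd
    have ht_bound := weightAux_append_le f hxt.of_cons huM htuM
    have ht_empty : desL t = 0 ∨ 1 ≤ if t = [] then 0 else 1 := by
      by_cases h : t = [] <;> simp [h, desL]
    rw [List.append_assoc, List.cons_append, hw, List.append_assoc,
      desL_append_of_forall_lt htuM, desL_eq_zero_of_pairwise huM,
      desL_append_cons_of_min hs ht, ascL_append_cons_of_min hs ht]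
    calc piecesWeight f (splitLeft s) + (desL t + 0 + weightAux f (t ++ (u ++ [M])))
        ≤ desL t + desL t * ascL t + desL s * ascL s := by omega
      _ ≤ (desL t + ((if s = [] then 0 else 1) + desL s)) *
            (ascL t + (if t = [] then 0 else 1) + ascL s) := add_mul_add_le_mul ht_empty
      _ = _ := by ring

theorem piecesWeight_splitLeft_le (f : ℕ) {l : List ℕ} (hl : l.Nodup) :
    piecesWeight f (splitLeft l) ≤ desL l * ascL l :=
  piecesWeight_splitLeft_le_of_weightAux_concat_le f
    (fun _ hs _ hx => weightAux_append_le f hs (List.pairwise_singleton _ _) (by simpa)) hl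

theorem exists_weightL_concat_of_min (h : ∀ y ∈ s, x < y) :
    ∃ f, s.length ≤ f ∧ weightL (s ++ [x]) = piecesWeight f (splitLeft s) := by
  obtain ⟨M, -, hw⟩ := exists_weightAux_succ_append_cons_of_min
    ((s.length + 3) ^ 2 - 1) (t := []) h (by simp)
  have hsq : s.length + 1 ≤ (s.length + 3) ^ 2 := by nlinarith
  refine ⟨(s.length + 3) ^ 2 - 1, by omega, ?_⟩
  have hfuel : ((s ++ [x]).length + 2) ^ 2 = (s.length + 3) ^ 2 - 1 + 1 := by
    rw [List.length_append, List.length_singleton, show s.length + 1 + 2 = s.length + 3 by omega]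
    omega
  rw [weightL, hfuel, hw]
  simp

theorem weightL_concat_of_min_le (hs : s.Nodup) (h : ∀ y ∈ s, x < y) :
    weightL (s ++ [x]) ≤ desL s * ascL s := by
  obtain ⟨f, -, hf⟩ := exists_weightL_concat_of_min h
  exact hf ▸ piecesWeight_splitLeft_le f hs

theorem IsPermList.exists_eq_concat_one {n : ℕ} {l : List ℕ} (hl : IsPermList n l)
    (hlast : l.getLast? = some 1) :
    ∃ s, l = s ++ [1] ∧ s.Nodup ∧ (∀ y ∈ s, 1 < y) ∧ s.length + 1 = n := by
  obtain ⟨s, rfl⟩ := List.getLast?_eq_some_iff.1 hlast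
  obtain ⟨hs, -, h1⟩ := List.nodup_append.1 (hl.nodup_iff.2 List.nodup_range')
  refine ⟨s, rfl, hs, fun y hy => ?_, by simpa using hl.length_eq⟩
  have := (List.mem_range'_1.1 (hl.subset (List.mem_append_left _ hy))).1
  have := h1 y hy 1 (by simp)
  omega

theorem weightL_le_of_isPermList {n : ℕ} {l : List ℕ} (hl : IsPermList n l)
    (hlast : l.getLast? = some 1) (hd : 1 ≤ desL l) :
    weightL l ≤ (desL l - 1) * (n - desL l - 1) := by
  obtain ⟨s, rfl, hs, h1, hlen⟩ := hl.exists_eq_concat_one hlast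
  have hne : s ≠ [] := by rintro rfl; simp at hd
  have hdes := desL_concat_of_min h1
  have hasc := desL_add_ascL hs
  rw [if_neg hne] at hdes
  calc weightL (s ++ [1]) ≤ desL s * ascL s := weightL_concat_of_min_le hs h1
    _ = _ := by rw [hdes]; congr 1; omega

theorem desL_range'_append_reverse_range'_append {c m d : ℕ} {u : List ℕ}
    (hu : u.Pairwise (· < ·)) (hcu : ∀ y ∈ u, c + m + d ≤ y) :
    desL (List.range' c m ++ (List.range' (c + m) d).reverse ++ u) = d - 1 := by
  rw [List.append_assoc, desL_append_of_forall_lt, desL_append_of_forall_lt,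
    desL_eq_zero_of_pairwise List.pairwise_lt_range', desL_eq_zero_of_pairwise hu,
    desL_reverse_range']
  · omega
  · intro x hx y hy
    have := List.mem_range'_1.1 (List.mem_reverse.1 hx)
    have := hcu y hy
    omega
  · intro x hx y hy
    have := List.mem_range'_1.1 hx
    simp only [List.mem_append, List.mem_reverse] at hy
    rcases hy with hy | hy
    · have := List.mem_range'_1.1 hy
      omega
    · have := hcu y hy
      omega

theorem weightAux_range'_append_reverse_range'_append (m : ℕ) :
    ∀ {c d f : ℕ} {u : List ℕ}, u.Pairwise (· < ·) → (∀ y ∈ u, c + m + d ≤ y) → m < f →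
      weightAux f (List.range' c m ++ (List.range' (c + m) d).reverse ++ u) = (d - 1) * m := by
  induction m with
  | zero =>
    intro c d f u hu hcu _
    simp only [List.range'_zero, List.nil_append, add_zero] at hcu ⊢
    have hD := weightAux_append_le f (s := (List.range' c d).reverse)
      (List.nodup_reverse.2 List.nodup_range') hu
      fun x hx y hy => by
        have := List.mem_range'_1.1 (List.mem_reverse.1 hx)
        have := hcu y hy
        omega
    rw [ascL_reverse, desL_eq_zero_of_pairwise List.pairwise_lt_range', mul_zero] at hD
    simpa using hD
  | succ m ih =>
    intro c d f u hu hcu hf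
    obtain ⟨f, rfl⟩ : ∃ f', f = f' + 1 := ⟨f - 1, by omega⟩
    set rest := List.range' (c + 1) m ++ (List.range' (c + 1 + m) d).reverse ++ u
    have hrest : ∀ y ∈ rest, c < y := by
      intro y hy
      simp only [rest, List.mem_append, List.mem_reverse, List.mem_range'_1] at hy
      rcases hy with (hy | hy) | hy
      · omega
      · omega
      · have := hcu y hy
        omega
    obtain ⟨M, hM, hw⟩ := exists_weightAux_succ_append_cons_of_min f (s := []) (by simp) hrest
    have huM : (u ++ [M]).Pairwise (· < ·) :=
      hu.append_singleton fun y hy => hM y (by simp [rest, hy])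
    have hcuM : ∀ y ∈ u ++ [M], c + 1 + m + d ≤ y := by
      intro y hy
      rcases List.mem_append.1 hy with hy | hy
      · have := hcu y hy
        omega
      · -- `c + m + d` is the largest entry of the sequence
        have := hM (c + m + d) (by simp [rest]; omega)
        simp at hy
        omega
    rw [List.range'_succ, show c + (m + 1) = c + 1 + m by omega, List.cons_append,
      List.cons_append, ← List.nil_append (c :: _), hw]
    have hrestM : rest ++ [M] =
        List.range' (c + 1) m ++ (List.range' (c + 1 + m) d).reverse ++ (u ++ [M]) := by
      simp [rest]
    rw [hrestM, desL_range'_append_reverse_range'_append huM hcuM, ih huM hcuM (by omega)]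
    simp only [splitLeft, splitLeftAux, List.length_nil, piecesWeight_nil]
    ring

theorem exists_isPermList_lastOne_desL_eq (n : ℕ) (hn : 1 ≤ n) :
    ∃ l, IsPermList n l ∧ l.getLast? = some 1 ∧ desL l = n - 1 :=
  ⟨(List.range' 1 n).reverse, List.reverse_perm _,
    by simp [List.getLast?_reverse, List.head?_range']; omega, desL_reverse_range' 1 n⟩

theorem exists_isPermList_lastOne_weightL_eq (m d : ℕ) (hd : 1 ≤ d) :
    ∃ l, IsPermList (m + d + 2) l ∧ l.getLast? = some 1 ∧ desL l = d ∧
      weightL l = (d - 1) * (m + 1) := by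
  set s := List.range' 2 m ++ (List.range' (2 + m) d).reverse ++ [m + d + 2]
  have hs1 : ∀ y ∈ s, 1 < y := by
    intro y hy
    simp only [s, List.mem_append, List.mem_reverse, List.mem_range'_1, List.mem_singleton] at hy
    omega
  have hsx : ∀ y ∈ List.range' 2 m ++ (List.range' (2 + m) d).reverse, y < m + d + 2 := by
    intro y hy
    simp only [List.mem_append, List.mem_reverse, List.mem_range'_1] at hy
    omega
  have hsplit : splitLeft s = [s] := splitLeft_append_cons_of_max (t := []) hsx (by simp)
  have hcu : ∀ y ∈ [m + d + 2], 2 + m + d ≤ y := by simp; omega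
  have hdes : desL s = d - 1 :=
    desL_range'_append_reverse_range'_append (List.pairwise_singleton _ _) hcu
  have hperm : IsPermList (m + d + 2) (s ++ [1]) := by
    have hrange : List.range' 1 (m + d + 2) =
        1 :: (List.range' 2 m ++ List.range' (2 + m) d ++ [m + d + 2]) := by
      rw [List.range'_append_1, show [m + d + 2] = List.range' (2 + (m + d)) 1 by simp; omega,
        List.range'_append_1, List.range'_succ]
    rw [IsPermList, hrange]
    exact List.perm_append_comm.trans
      ((((List.reverse_perm _).append_left _).append_right _).cons 1)
  obtain ⟨f, hf, hw⟩ := exists_weightL_concat_of_min hs1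
  refine ⟨s ++ [1], hperm, List.getLast?_concat .., ?_, ?_⟩
  · rw [desL_concat_of_min hs1, if_neg (by simp [s]), hdes]
    omega
  · rw [hw, hsplit, piecesWeight_cons, piecesWeight_nil, hdes,
      weightAux_range'_append_reverse_range'_append m (List.pairwise_singleton _ _) hcu
        (by simp [s] at hf; omega)]
    ring

theorem maxwt_lastOne_general (n d : ℕ) (hd1 : 1 ≤ d) (hd : d ≤ n - 1) :
    IsGreatest {m | ∃ l : List ℕ, IsPermList n l ∧ l.getLast? = some 1 ∧
      desL l = d ∧ weightL l = m} ((d - 1) * (n - d - 1)) := by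
  refine ⟨?_, ?_⟩
  · by_cases hdn : d + 2 ≤ n
    · obtain ⟨l, hl, hlast, hdes, hw⟩ := exists_isPermList_lastOne_weightL_eq (n - d - 2) d hd1
      rw [show n - d - 2 + d + 2 = n by omega] at hl
      exact ⟨l, hl, hlast, hdes, by rw [hw]; congr 1; omega⟩
    · -- `d = n - 1`: the bound is `0`, so the upper bound already pins the weight
      obtain ⟨l, hl, hlast, hdes⟩ := exists_isPermList_lastOne_desL_eq n (by omega)
      have hw := weightL_le_of_isPermList hl hlast (by omega)
      rw [hdes, show n - (n - 1) - 1 = 0 by omega, mul_zero] at hw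
      refine ⟨l, hl, hlast, by omega, ?_⟩
      rw [Nat.le_zero.1 hw, show n - d - 1 = 0 by omega, mul_zero]
  · rintro _ ⟨l, hl, hlast, rfl, rfl⟩
    exact weightL_le_of_isPermList hl hlast hd1

/-- The maximum weight over permutations of length `n` with `d` descents whose
last entry is `1` is `(d-1)(n-d-1)`. -/
theorem maxwt_lastOne (n d : ℕ) (hn : 2 ≤ n) (hd1 : 1 ≤ d) (hd : d ≤ n - 1) :
    IsGreatest {m | ∃ l : List ℕ, IsPermList n l ∧ l.getLast? = some 1 ∧
      desL l = d ∧ weightL l = m} ((d - 1) * (n - d - 1)) :=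
  maxwt_lastOne_general n d hd1 hd
end

section
/- Let ℓ, n, d, q be integers with 0 ≤ q ≤ d−1, q < ℓ, and d−q−1 < n−ℓ−1. Then q(ℓ−q−1) + (d−q−1)(n−ℓ−d+q) ≤ (d−1)(n−d−1). -/
/-- The arithmetic inequality underlying the weight-disparity bound. -/
theorem disparity_arith (ℓ n d q : ℤ) (h0 : 0 ≤ q) (h1 : q ≤ d - 1)
    (h2 : q < ℓ) (h3 : d - q - 1 < n - ℓ - 1) :
    q * (ℓ - q - 1) + (d - q - 1) * (n - ℓ - d + q) ≤ (d - 1) * (n - d - 1) := by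
  nlinarith [mul_nonneg (sub_nonneg.2 h1) (sub_nonneg.2 h0), mul_nonneg h0 (sub_nonneg.2 h1),
    mul_nonneg h0 (by linarith : (0:ℤ) ≤ ℓ - q - 1),
    mul_nonneg (by linarith : (0:ℤ) ≤ d - 1 - q) (by linarith : (0:ℤ) ≤ n - ℓ - 1 - (d - q - 1)),
    mul_nonneg h0 (by linarith : (0:ℤ) ≤ n - ℓ - 1 - (d - q - 1)),
    mul_nonneg (by linarith : (0:ℤ) ≤ d - 1 - q) (by linarith : (0:ℤ) ≤ ℓ - q - 1)]
end

section
/- Let T(n,k) be as in OEIS A256193 (partitions of n with exactly k parts of a second type). For fixed k ∈ ℕ and d ≥ 2k, T(d+k, d) = Σ_{i=1}^{k} (−1)^{i+1} · C(k, i) · T(d+k−i, d−i) + 1. -/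
/-!
A marked partition is a partition `λ ⊢ n` together with the choice of which `k` of its `ℓ(λ)`
parts are primed, so `T(n, k) = ∑_{λ ⊢ n} C(ℓ(λ), k)`. Removing the first column of the Young
diagram of a partition of `x + k` into `x + s` parts leaves an arbitrary partition of `k - s`
once `x ≥ k`, hence `T(x + k, x) = ∑_{s ≤ k} p(k - s) C(x + s, s)` there. So on `x ≥ k` the
function `x ↦ T(x + k, x)` is a polynomial of degree `k` with leading coefficient
`p(0) / k! = 1 / k!`, and its `k`-th forward difference is `1`; for `d ≥ 2k` that difference,
taken at `d - k`, is the alternating sum of the theorem.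
-/
/-- `T(n,k)` (OEIS A256193): the number of partitions of `n` with exactly `k`
parts of a second type (primed), recorded as weakly decreasing sequences of
(part, primed?) pairs so that the arrangement of primed/unprimed copies within
a run of equal parts matters. -/
noncomputable def Tpart (n k : ℕ) : ℕ :=
  Set.ncard {l : List (ℕ × Bool) |
    l.Pairwise (fun a b => b.1 ≤ a.1) ∧ (∀ p ∈ l, 1 ≤ p.1) ∧
      (l.map Prod.fst).sum = n ∧ (l.filter fun p => p.2).length = k}

section FirstColumn

open Multiset

/-- A multiset of positive integers is read as the rows of a Young diagram; `addFirstColumn l`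
prepends a column of height `l`, padding with rows of length `1` (meant for `card t ≤ l`). -/
def addFirstColumn (l : ℕ) (t : Multiset ℕ) : Multiset ℕ :=
  t.map (· + 1) + replicate (l - card t) 1

def removeFirstColumn (s : Multiset ℕ) : Multiset ℕ :=
  (s.filter (1 < ·)).map (· - 1)

lemma pos_of_mem_addFirstColumn {l : ℕ} {t : Multiset ℕ} {x : ℕ}
    (hx : x ∈ addFirstColumn l t) : 0 < x := by
  rcases mem_add.mp hx with hx | hx
  · obtain ⟨y, -, rfl⟩ := mem_map.mp hx
    exact y.succ_pos
  · rw [eq_of_mem_replicate hx]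
    exact Nat.one_pos

lemma card_addFirstColumn {l : ℕ} {t : Multiset ℕ} (ht : card t ≤ l) :
    card (addFirstColumn l t) = l := by
  simp only [addFirstColumn, card_add, card_map, card_replicate]
  omega

lemma sum_addFirstColumn {l : ℕ} {t : Multiset ℕ} (ht : card t ≤ l) :
    (addFirstColumn l t).sum = t.sum + l := by
  simp only [addFirstColumn, sum_add, sum_map_add, map_id', map_const', sum_replicate, smul_eq_mul,
    mul_one]
  omega

lemma pos_of_mem_removeFirstColumn {s : Multiset ℕ} {x : ℕ} (hx : x ∈ removeFirstColumn s) :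
    0 < x := by
  obtain ⟨y, hy, rfl⟩ := mem_map.mp hx
  have := (mem_filter.mp hy).2
  omega

lemma card_removeFirstColumn_le (s : Multiset ℕ) : card (removeFirstColumn s) ≤ card s := by
  simpa [removeFirstColumn] using card_le_card (filter_le _ s)

lemma removeFirstColumn_addFirstColumn (l : ℕ) {t : Multiset ℕ} (ht : ∀ x ∈ t, 0 < x) :
    removeFirstColumn (addFirstColumn l t) = t := by
  have hlong : (t.map (· + 1)).filter (1 < ·) = t.map (· + 1) :=
    filter_eq_self.mpr fun x hx ↦ by
      obtain ⟨y, hy, rfl⟩ := mem_map.mp hx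
      have := ht y hy
      omega
  have hshort : (replicate (l - card t) 1).filter (1 < ·) = 0 :=
    filter_eq_nil.mpr fun x hx ↦ by rw [eq_of_mem_replicate hx]; decide
  simp [removeFirstColumn, addFirstColumn, filter_add, hlong, hshort, map_map]

lemma addFirstColumn_removeFirstColumn {s : Multiset ℕ} (hs : ∀ x ∈ s, 0 < x) :
    addFirstColumn (card s) (removeFirstColumn s) = s := by
  have hlong : ((s.filter (1 < ·)).map (· - 1)).map (· + 1) = s.filter (1 < ·) := by
    rw [map_map]
    refine (map_congr rfl fun x hx ↦ ?_).trans (map_id _)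
    have := (mem_filter.mp hx).2
    simp only [Function.comp_apply, id_eq]
    omega
  have hshort : s.filter (¬ 1 < ·) = replicate (card (s.filter (¬ 1 < ·))) 1 :=
    eq_replicate_card.mpr fun x hx ↦ by
      have := hs x (mem_of_mem_filter hx)
      have := (mem_filter.mp hx).2
      omega
  have hcard : card s = card (s.filter (1 < ·)) + card (s.filter (¬ 1 < ·)) := by
    rw [← card_add, filter_add_not]
  conv_rhs => rw [← filter_add_not (1 < ·) s, hshort]
  rw [addFirstColumn, removeFirstColumn, hlong, card_map, hcard, Nat.add_sub_cancel_left]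

lemma sum_removeFirstColumn {s : Multiset ℕ} (hs : ∀ x ∈ s, 0 < x) :
    (removeFirstColumn s).sum + card s = s.sum := by
  conv_rhs => rw [← addFirstColumn_removeFirstColumn hs]
  rw [sum_addFirstColumn (card_removeFirstColumn_le s)]

def Nat.Partition.removeFirstColumnEquiv (j l : ℕ) :
    {P : (j + l).Partition // card P.parts = l} ≃ {Q : j.Partition // card Q.parts ≤ l} where
  toFun P := ⟨⟨removeFirstColumn P.1.parts, pos_of_mem_removeFirstColumn, by
      have := sum_removeFirstColumn fun _ ↦ P.1.parts_pos
      rw [P.1.parts_sum, P.2] at this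
      omega⟩, P.2 ▸ card_removeFirstColumn_le _⟩
  invFun Q := ⟨⟨addFirstColumn l Q.1.parts, pos_of_mem_addFirstColumn, by
      rw [sum_addFirstColumn Q.2, Q.1.parts_sum]⟩, card_addFirstColumn Q.2⟩
  left_inv P := by
    ext1; ext1
    have h := addFirstColumn_removeFirstColumn fun _ ↦ P.1.parts_pos
    rwa [P.2] at h
  right_inv Q := by
    ext1; ext1
    exact removeFirstColumn_addFirstColumn l fun _ ↦ Q.1.parts_pos

end FirstColumn

open Finset fwdDiff

section FiniteDifferences

variable {M G : Type*} [AddCommMonoid M] [AddCommGroup G]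

lemma fwdDiff_iter_congr {h : M} {f g : M → G} {n : ℕ} {y : M}
    (hfg : ∀ t ≤ n, f (y + t • h) = g (y + t • h)) :
    (Δ_[h])^[n] f y = (Δ_[h])^[n] g y := by
  simp only [fwdDiff_iter_eq_sum_shift]
  exact sum_congr rfl fun t ht ↦ by rw [hfg t (Nat.lt_succ_iff.mp (mem_range.mp ht))]

lemma fwdDiff_iter_const_of_pos (h : M) (g : G) {n : ℕ} (hn : 0 < n) :
    (Δ_[h])^[n] (fun _ ↦ g : M → G) = 0 := by
  obtain ⟨n, rfl⟩ := Nat.exists_eq_add_of_lt hn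
  rw [Function.iterate_succ_apply, fwdDiff_const]
  ext y
  simp [fwdDiff_iter_eq_sum_shift]

end FiniteDifferences

lemma fwdDiff_iter_choose_of_le {s k : ℕ} (hs : s ≤ k) (y : ℕ) :
    (Δ_[1])^[k] (fun x ↦ x.choose s : ℕ → ℤ) y = if s = k then 1 else 0 := by
  obtain ⟨n, rfl⟩ := Nat.exists_eq_add_of_le' hs
  have hchoose := fwdDiff_iter_choose 0 s
  rw [add_zero] at hchoose
  rw [Function.iterate_add_apply, hchoose]
  rcases Nat.eq_zero_or_pos n with rfl | hn
  · simp
  · simp [fwdDiff_iter_const_of_pos _ _ hn, hn.ne']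

lemma fwdDiff_iter_sum_mul_choose_add (c : ℕ → ℤ) (k y : ℕ) :
    (Δ_[1])^[k] (fun x ↦ ∑ s ∈ range (k + 1), c s * (x + s).choose s : ℕ → ℤ) y = c k := by
  have hfun : (fun x ↦ ∑ s ∈ range (k + 1), c s * (x + s).choose s : ℕ → ℤ) =
      ∑ s ∈ range (k + 1), c s • fun x ↦ ((x + s).choose s : ℤ) := by
    ext x
    simp
  have hterm : ∀ s ∈ range (k + 1),
      (Δ_[1])^[k] (fun x ↦ ((x + s).choose s : ℤ)) y = if s = k then 1 else 0 := fun s hs ↦ by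
    rw [fwdDiff_iter_comp_add 1 (fun x : ℕ ↦ (x.choose s : ℤ)),
      fwdDiff_iter_choose_of_le (Nat.lt_succ_iff.mp (mem_range.mp hs))]
  rw [hfun, fwdDiff_iter_finsetSum, Finset.sum_apply]
  simp only [fwdDiff_iter_const_smul, Pi.smul_apply, smul_eq_mul]
  rw [sum_congr rfl fun s hs ↦ by rw [hterm s hs]]
  simp

lemma Multiset.sort_coe_of_pairwise {α : Type*} (r : α → α → Prop) [DecidableRel r] [IsTrans α r]
    [Std.Antisymm r] [Std.Total r] {L : List α} (hL : L.Pairwise r) :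
    (L : Multiset α).sort r = L :=
  List.mergeSort_eq_self _ (by simpa using hL)

lemma List.length_filter_snd_eq_count {α : Type*} (l : List (α × Bool)) :
    (l.filter fun p ↦ p.2).length = (l.map Prod.snd).count true := by
  simp [List.count_eq_countP, List.countP_eq_length_filter, List.filter_map, Function.comp_def]

lemma List.count_true_ofFn {l : ℕ} (f : Fin l → Bool) :
    (List.ofFn f).count true = #{i | f i = true} := by
  rw [← Multiset.coe_count, ← Fin.univ_val_map, Multiset.count_map, ← Finset.filter_val]
  simp only [eq_comm]
  rfl

def boolListCountEquiv (l k : ℕ) :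
    {b : List Bool // b.length = l ∧ b.count true = k} ≃ {s : Finset (Fin l) // #s = k} where
  toFun b := ⟨univ.filter fun i : Fin l ↦ b.1.getD i false, by
    have hb : b.1 = List.ofFn fun i : Fin l ↦ b.1.getD i false := by
      apply List.ext_getElem <;> simp [b.2.1]
    rw [← List.count_true_ofFn, ← hb, b.2.2]⟩
  invFun s := ⟨List.ofFn fun i ↦ decide (i ∈ s.1), by simp, by simp [List.count_true_ofFn, s.2]⟩
  left_inv b := by
    ext1
    apply List.ext_getElem <;> simp [b.2.1]
  right_inv s := by
    ext1
    ext i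
    simp

lemma card_boolList_count_eq_choose (l k : ℕ) :
    Nat.card {b : List Bool // b.length = l ∧ b.count true = k} = l.choose k := by
  rw [Nat.card_congr (boolListCountEquiv l k), Nat.card_eq_fintype_card, Fintype.card_finset_len,
    Fintype.card_fin]

lemma Nat.Partition.card_parts_le {n : ℕ} (P : n.Partition) : P.parts.card ≤ n := by
  simpa [P.parts_sum] using Multiset.card_nsmul_le_sum fun _ ↦ P.parts_pos (i := _)

lemma Nat.Partition.card_filter_card_parts_eq {j l : ℕ} (hjl : j ≤ l) :
    #{P : (j + l).Partition | P.parts.card = l} = Fintype.card j.Partition := by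
  rw [← Fintype.card_subtype, Fintype.card_congr (Nat.Partition.removeFirstColumnEquiv j l),
    Fintype.card_subtype, filter_true_of_mem fun Q _ ↦ Q.card_parts_le.trans hjl, Finset.card_univ]

lemma Nat.Partition.sum_choose_card_parts (n k : ℕ) :
    ∑ P : n.Partition, P.parts.card.choose k =
      ∑ l ∈ range (n + 1), #{P : n.Partition | P.parts.card = l} * l.choose k := by
  rw [← sum_fiberwise_of_maps_to' (t := range (n + 1)) (f := (·.choose k))
    fun P _ ↦ mem_range.mpr (Nat.lt_succ_of_le P.card_parts_le)]
  simp only [sum_const, smul_eq_mul]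

def tpartListEquiv (n k : ℕ) :
    {l : List (ℕ × Bool) |
      l.Pairwise (fun a b => b.1 ≤ a.1) ∧ (∀ p ∈ l, 1 ≤ p.1) ∧
        (l.map Prod.fst).sum = n ∧ (l.filter fun p => p.2).length = k} ≃
    Σ P : n.Partition, {b : List Bool // b.length = P.parts.card ∧ b.count true = k} where
  toFun l := ⟨⟨l.1.map Prod.fst, fun hi ↦ by
      obtain ⟨p, hp, rfl⟩ := List.mem_map.mp (Multiset.mem_coe.mp hi)
      exact l.2.2.1 p hp, by simpa using l.2.2.2.1⟩,
    l.1.map Prod.snd, by simp, by rw [← List.length_filter_snd_eq_count]; exact l.2.2.2.2⟩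
  invFun Pb := ⟨(Pb.1.parts.sort (· ≥ ·)).zip Pb.2.1, by
      have hlen : (Pb.1.parts.sort (· ≥ ·)).length = Pb.2.1.length := by
        simp [Multiset.length_sort, Pb.2.2.1]
      have hfst := List.map_fst_zip hlen.le
      refine ⟨List.pairwise_map.mp (hfst ▸ Multiset.pairwise_sort _ _),
        fun p hp ↦ Pb.1.parts_pos ((Multiset.mem_sort _).mp (List.of_mem_zip hp).1), ?_, ?_⟩
      · rw [hfst, ← Multiset.sum_coe, Multiset.sort_eq, Pb.1.parts_sum]
      · rw [List.length_filter_snd_eq_count, List.map_snd_zip hlen.ge, Pb.2.2.2]⟩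
  left_inv l := by
    ext1
    simp only
    rw [Multiset.sort_coe_of_pairwise _ (List.pairwise_map.mpr l.2.1), List.zip_map']
    simp
  right_inv Pb := by
    have hlen : (Pb.1.parts.sort (· ≥ ·)).length = Pb.2.1.length := by
      simp [Multiset.length_sort, Pb.2.2.1]
    refine Sigma.subtype_ext (Nat.Partition.ext ?_) (List.map_snd_zip hlen.ge)
    simp only
    rw [List.map_fst_zip hlen.le, Multiset.sort_eq]

lemma Tpart_eq_sum_choose (n k : ℕ) :
    Tpart n k = ∑ P : n.Partition, P.parts.card.choose k := by
  have (l : ℕ) : Finite {b : List Bool // b.length = l ∧ b.count true = k} :=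
    .of_equiv _ (boolListCountEquiv l k).symm
  rw [Tpart, ← Nat.card_coe_set_eq, Nat.card_congr (tpartListEquiv n k), Nat.card_sigma]
  simp only [card_boolList_count_eq_choose]

lemma Tpart_add_eq_sum {x k : ℕ} (hk : k ≤ x) :
    Tpart (x + k) x = ∑ s ∈ range (k + 1), Fintype.card (k - s).Partition * (x + s).choose s := by
  rw [Tpart_eq_sum_choose, Nat.Partition.sum_choose_card_parts, add_assoc, sum_range_add]
  have hfew : ∀ l ∈ range x, #{P : (x + k).Partition | P.parts.card = l} * l.choose x = 0 :=
    fun l hl ↦ by rw [Nat.choose_eq_zero_of_lt (mem_range.mp hl), mul_zero]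
  rw [sum_eq_zero hfew, zero_add]
  refine sum_congr rfl fun s hs ↦ ?_
  have hs : s ≤ k := Nat.lt_succ_iff.mp (mem_range.mp hs)
  rw [Nat.choose_symm_add, show x + k = (k - s) + (x + s) by omega,
    Nat.Partition.card_filter_card_parts_eq (by omega)]

lemma fwdDiff_iter_Tpart_add_self {k y : ℕ} (hk : k ≤ y) :
    (Δ_[1])^[k] (fun x ↦ (Tpart (x + k) x : ℤ)) y = 1 := by
  let c s : ℤ := Fintype.card (k - s).Partition
  have hpoly : ∀ t ≤ k, (Tpart (y + t • 1 + k) (y + t • 1) : ℤ) =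
      ∑ s ∈ range (k + 1), c s * ((y + t • 1 + s).choose s : ℕ) := fun t _ ↦ by
    rw [Tpart_add_eq_sum (hk.trans (Nat.le_add_right _ _))]
    push_cast
    rfl
  rw [fwdDiff_iter_congr (g := fun x ↦ ∑ s ∈ range (k + 1), c s * ((x + s).choose s : ℕ)) hpoly,
    fwdDiff_iter_sum_mul_choose_add]
  simp [c]

lemma sum_range_alternating_Tpart {k d : ℕ} (h : 2 * k ≤ d) :
    ∑ i ∈ range (k + 1), (-1 : ℤ) ^ i * k.choose i * Tpart (d + k - i) (d - i) = 1 := by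
  have hdiff := fwdDiff_iter_Tpart_add_self (k := k) (y := d - k) (by omega)
  rw [fwdDiff_iter_eq_sum_shift, ← sum_range_reflect] at hdiff
  refine .trans (sum_congr rfl fun i hi ↦ ?_) hdiff
  have hi : i ≤ k := Nat.lt_succ_iff.mp (mem_range.mp hi)
  rw [Nat.add_sub_cancel, Nat.sub_sub_self hi, Nat.choose_symm hi, smul_eq_mul, smul_eq_mul,
    mul_one, show d - k + (k - i) = d - i by omega, show d - i + k = d + k - i by omega]

/-- For fixed `k` and `d ≥ 2k`,
`T(d+k,d) = Σ_{i=1}^{k} (-1)^{i+1} C(k,i) T(d+k-i, d-i) + 1`. -/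
theorem Tpart_alternating (k d : ℕ) (h : 2 * k ≤ d) :
    (Tpart (d + k) d : ℤ) =
      (∑ i ∈ Finset.Icc 1 k,
        (-1) ^ (i + 1) * (Nat.choose k i : ℤ) * Tpart (d + k - i) (d - i)) + 1 := by
  have key := sum_range_alternating_Tpart h
  rw [range_eq_Ico, sum_eq_sum_Ico_succ_bot (by omega), zero_add,
    Ico_add_one_right_eq_Icc] at key
  simp only [pow_zero, Nat.choose_zero_right, Nat.cast_one, one_mul, Nat.sub_zero] at key
  simp only [pow_succ, mul_neg_one, neg_mul, sum_neg_distrib]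
  linarith
end
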